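/- arXiv:2012.10794 — 6 statements merged into one kernel-verified Lean document; each statement's English description precedes it below -/
import Mathlib

section
/- Let I ⊆ ℝ be an interval, Φ : I → ℝ strictly convex and continuous, and x < y < z in I. Let ε > 0 satisfy x - ε ∈ I and y + ε ≤ z - ε. Then there exist unique δ, γ > 0 with δ + γ = ε and Φ(x - δ) + Φ(y + ε) + Φ(z - γ) = Φ(x) + Φ(y) + Φ(z). -/
/-!
Put `G δ = Φ (x - δ) + Φ (z - (ε - δ))` on `[0, ε]`; the claim is that `G` takes the value
`c = Φ x + Φ y + Φ z - Φ (y + ε)` exactly once on `(0, ε)`. As `Φ` is strictly convex, moving two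
points apart while keeping their sum raises `Φ a + Φ b`; comparing `(y + ε, z - ε)` with `(y, z)`
gives `G 0 < c`, and `(x - ε, y + ε)` with `(x, y)` gives `c < G ε`. So `c` is attained by the
intermediate value theorem, and only once, since a convex function is strictly increasing beyond
any point where it exceeds its value at the left endpoint.
-/

open Set

theorem StrictConvexOn.map_add_map_lt_map_add_map {𝕜 : Type*} [Field 𝕜] [LinearOrder 𝕜]
    [IsStrictOrderedRing 𝕜] {s : Set 𝕜} {f : 𝕜 → 𝕜} (hf : StrictConvexOn 𝕜 s f)
    {a b c d : 𝕜} (ha : a ∈ s) (hd : d ∈ s) (hab : a < b) (hbd : b < d) (h : a + d = b + c) :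
    f b + f c < f a + f d := by
  have had : 0 < d - a := by linarith
  set t := (d - b) / (d - a)
  have ht₀ : 0 < t := div_pos (by linarith) had
  have ht₁ : 0 < 1 - t := by
    rw [sub_pos, div_lt_one had]
    linarith
  have hb : t • a + (1 - t) • d = b := by
    simp only [smul_eq_mul, t]
    field_simp
    ring
  have hc : (1 - t) • a + t • d = c := by
    simp only [smul_eq_mul, t]
    field_simp
    linear_combination (d - a) * h
  have hfb := hf.2 ha hd (sub_pos.1 had).ne ht₀ ht₁ (by ring)
  have hfc := hf.2 ha hd (sub_pos.1 had).ne ht₁ ht₀ (by ring)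
  rw [hb] at hfb
  rw [hc] at hfc
  simp only [smul_eq_mul] at hfb hfc
  linarith

theorem ConvexOn.existsUnique_mem_Ioo_eq {f : ℝ → ℝ} {a b c : ℝ} (hab : a ≤ b)
    (hf : ConvexOn ℝ (Icc a b) f) (hfc : ContinuousOn f (Icc a b)) (ha : f a < c)
    (hb : c < f b) : ∃! t, t ∈ Ioo a b ∧ f t = c := by
  obtain ⟨t, ht, hft⟩ := intermediate_value_Ioo hab hfc ⟨ha, hb⟩
  refine ⟨t, ⟨ht, hft⟩, ?_⟩
  have hmem : ∀ u ∈ Ioo a b, u ∈ Icc a b := fun u hu => Ioo_subset_Icc_self hu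
  have hinj : ∀ u ∈ Ioo a b, f u = c → InjOn f (Icc a b ∩ Ici u) := fun u hu hfu =>
    (hf.strictMonoOn (left_mem_Icc.2 hab) hu.1 (hfu ▸ ha)).injOn
  rintro u ⟨hu, hfu⟩
  rcases le_total t u with htu | hut
  · exact hinj t ht hft ⟨hmem u hu, htu⟩ ⟨hmem t ht, self_mem_Ici⟩ (hfu.trans hft.symm)
  · exact hinj u hu hfu ⟨hmem u hu, self_mem_Ici⟩ ⟨hmem t ht, hut⟩ (hfu.trans hft.symm)

theorem unique_delta_gamma_general (I : Set ℝ) (Φ : ℝ → ℝ)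
    (hΦ : StrictConvexOn ℝ I Φ) (hΦc : ContinuousOn Φ I)
    (x y z : ℝ) (hx : x ∈ I) (hy : y ∈ I) (hz : z ∈ I)
    (hxy : x < y) (ε : ℝ) (hε : 0 < ε)
    (hxε : x - ε ∈ I) (hyzε : y + ε ≤ z - ε) :
    ∃! dg : ℝ × ℝ, 0 < dg.1 ∧ 0 < dg.2 ∧ dg.1 + dg.2 = ε ∧
      Φ (x - dg.1) + Φ (y + ε) + Φ (z - dg.2) = Φ x + Φ y + Φ z := by
  have hI := hΦ.1.ordConnected
  have hyε : y + ε ∈ I := hI.out hy hz ⟨by linarith, by linarith⟩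
  have hzε : z - ε ∈ I := hI.out hy hz ⟨by linarith, by linarith⟩
  have hleft : MapsTo (fun δ => x - δ) (Icc 0 ε) I := fun δ hδ =>
    hI.out hxε hx ⟨by linarith [hδ.2], by linarith [hδ.1]⟩
  have hright : MapsTo (fun δ => z - (ε - δ)) (Icc 0 ε) I := fun δ hδ =>
    hI.out hzε hz ⟨by linarith [hδ.1], by linarith [hδ.2]⟩
  set G : ℝ → ℝ := fun δ => Φ (x - δ) + Φ (z - (ε - δ)) with hG
  have hGconv : ConvexOn ℝ (Icc 0 ε) G :=
    ((hΦ.convexOn.comp_affineMap (AffineMap.const ℝ ℝ x - AffineMap.id ℝ ℝ)).subset hleft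
      (convex_Icc 0 ε)).add
    ((hΦ.convexOn.comp_affineMap (AffineMap.const ℝ ℝ z -
      (AffineMap.const ℝ ℝ ε - AffineMap.id ℝ ℝ))).subset hright (convex_Icc 0 ε))
  have hGcont : ContinuousOn G (Icc 0 ε) :=
    (hΦc.comp (by fun_prop) hleft).add (hΦc.comp (by fun_prop) hright)
  have hG₀ : G 0 < Φ x + Φ y + Φ z - Φ (y + ε) := by
    have := hΦ.map_add_map_lt_map_add_map (b := y + ε) (c := z - ε) hy hz
      (by linarith) (by linarith) (by ring)
    simp only [hG, sub_zero]
    linarith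
  have hGε : Φ x + Φ y + Φ z - Φ (y + ε) < G ε := by
    have := hΦ.map_add_map_lt_map_add_map (b := x) (c := y) hxε hyε
      (by linarith) (by linarith) (by ring)
    simp only [hG, sub_self, sub_zero]
    linarith
  obtain ⟨δ, ⟨hδ, hGδ⟩, huniq⟩ := hGconv.existsUnique_mem_Ioo_eq hε.le hGcont hG₀ hGε
  refine ⟨(δ, ε - δ), ⟨hδ.1, sub_pos.2 hδ.2, add_sub_cancel _ _, by linarith⟩, ?_⟩
  rintro ⟨δ', γ'⟩ ⟨hδ', hγ', hsum, heq⟩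
  obtain rfl : γ' = ε - δ' := by linarith
  obtain rfl : δ' = δ := huniq δ' ⟨⟨hδ', by linarith⟩, by linarith⟩
  rfl

/-- For `Φ` strictly convex and continuous on an interval `I`,
`x < y < z` in `I`, and `ε > 0` with `x - ε ∈ I` and `y + ε ≤ z - ε`, there exist
unique `δ, γ > 0` with `δ + γ = ε` and
`Φ (x - δ) + Φ (y + ε) + Φ (z - γ) = Φ x + Φ y + Φ z`. -/
theorem unique_delta_gamma (I : Set ℝ) (Φ : ℝ → ℝ)
    (hΦ : StrictConvexOn ℝ I Φ) (hΦc : ContinuousOn Φ I)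
    (x y z : ℝ) (hx : x ∈ I) (hy : y ∈ I) (hz : z ∈ I)
    (hxy : x < y) (hyz : y < z) (ε : ℝ) (hε : 0 < ε)
    (hxε : x - ε ∈ I) (hyzε : y + ε ≤ z - ε) :
    ∃! dg : ℝ × ℝ, 0 < dg.1 ∧ 0 < dg.2 ∧ dg.1 + dg.2 = ε ∧
      Φ (x - dg.1) + Φ (y + ε) + Φ (z - dg.2) = Φ x + Φ y + Φ z :=
  unique_delta_gamma_general I Φ hΦ hΦc x y z hx hy hz hxy ε hε hxε hyzε
end

section
/- With the setup of the previous statement (vᵢ = R eᵢ, u = (R/√d)Σeᵢ, wᵢ = 1/R - d aᵢ/(R√d + dR ā)), fix p ∈ (1, ∞] with dual exponent q, and let λ = (r/R)(Σᵢ |1/√d + ā - aᵢ|^q)^{1/q}, where r > 0. Then the ℓ_p distance from the point x_i = vᵢ + (aᵢ - λ)u to the hyperplane H = {z : ⟨w, z⟩ = 1} equals exactly r. -/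
/-!
If a linear functional satisfies `f y ≤ M‖y‖` everywhere and `M‖y₀‖ ≤ f y₀` for some `y₀` with
`f y₀ > 0`, then the level set `{f = c}` lies at distance `|c - f x| / M` from `x`:
`|f (z - x)| ≤ M‖z - x‖` bounds it below, and the point of the level set on the line `x + ℝ y₀`
attains the bound. For `z ↦ ∑ w_j z_j` on `ℓ_p` one can take `M = ‖w‖_q` by Hölder's inequality,
with `y₀ = sign w · |w|^(q-1)` from its equality case.

Here `w = d / (R S) • c` with `S = √d + d ā` and `c_j = 1/√d + ā - a_j`; since `∑ c_j = √d`,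
`∑ w_j x_{ij} = 1 - d λ / S`, and the distance is `(d λ / S) / (d / (R S) ‖c‖_q) = λ R / ‖c‖_q = r`.
-/

open Finset
open scoped ENNReal

theorem infDist_setOf_eq_abs_sub_div {E : Type*} [SeminormedAddCommGroup E] [NormedSpace ℝ E]
    (f : E →ₗ[ℝ] ℝ) {M : ℝ} (hf : ∀ y, f y ≤ M * ‖y‖) {y₀ : E} (hy₀ : 0 < f y₀)
    (hM : M * ‖y₀‖ ≤ f y₀) (x : E) (c : ℝ) :
    Metric.infDist x {z | f z = c} = |c - f x| / M := by
  have hM₀ : 0 < M := pos_of_mul_pos_left (hy₀.trans_le (hf y₀)) (norm_nonneg _)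
  have habs (y : E) : |f y| ≤ M * ‖y‖ := by
    have := hf (-y)
    rw [map_neg, norm_neg] at this
    exact abs_le.2 ⟨by linarith, hf y⟩
  set z₀ := x + ((c - f x) / f y₀) • y₀
  have hz₀ : z₀ ∈ {z | f z = c} := by
    show f z₀ = c
    simp only [z₀, map_add, map_smul, smul_eq_mul]
    field_simp
    ring
  refine le_antisymm ((Metric.infDist_le_dist_of_mem hz₀).trans ?_)
    ((Metric.le_infDist ⟨z₀, hz₀⟩).2 fun z hz => ?_)
  · calc dist x z₀ = |c - f x| / f y₀ * ‖y₀‖ := by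
          rw [dist_comm, dist_eq_norm, add_sub_cancel_left, norm_smul, Real.norm_eq_abs, abs_div,
            abs_of_pos hy₀]
      _ ≤ |c - f x| / M := by
          rw [div_mul_eq_mul_div, div_le_div_iff₀ hy₀ hM₀, mul_assoc]
          exact mul_le_mul_of_nonneg_left (by linarith) (abs_nonneg _)
  · have hz : f z = c := hz
    calc |c - f x| / M = |f (z - x)| / M := by rw [map_sub, hz]
      _ ≤ dist x z := by rw [div_le_iff₀ hM₀, dist_comm, dist_eq_norm, mul_comm]; exact habs _

namespace PiLp

variable {ι : Type*} [Fintype ι]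

theorem sum_mul_le_norm_top_mul_norm_one (x y : ι → ℝ) :
    ∑ i, x i * y i ≤ ‖WithLp.toLp ∞ x‖ * ‖WithLp.toLp 1 y‖ := by
  rw [norm_toLp, norm_eq_of_L1, mul_sum]
  refine sum_le_sum fun i _ => ?_
  calc x i * y i ≤ |x i| * |y i| := by rw [← abs_mul]; exact le_abs_self _
    _ ≤ ‖x‖ * ‖y i‖ := mul_le_mul_of_nonneg_right (norm_le_pi_norm x i) (abs_nonneg _)

theorem sum_mul_le_norm_mul_norm {p q : ℝ≥0∞} [p.HolderConjugate q] (x y : ι → ℝ) :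
    ∑ i, x i * y i ≤ ‖WithLp.toLp p x‖ * ‖WithLp.toLp q y‖ := by
  by_cases hp : p = ∞
  · obtain rfl := hp
    obtain rfl := (ENNReal.HolderConjugate.eq_top_iff_eq_one ∞ q).1 rfl
    exact sum_mul_le_norm_top_mul_norm_one x y
  by_cases hq : q = ∞
  · obtain rfl := hq
    obtain rfl := (ENNReal.HolderConjugate.eq_top_iff_eq_one ∞ p).1 rfl
    simpa only [mul_comm] using sum_mul_le_norm_top_mul_norm_one y x
  have hpq := ENNReal.HolderConjugate.toReal_of_ne_top hp hq
  rw [norm_eq_sum hpq.pos, norm_eq_sum hpq.symm.pos]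
  exact Real.inner_le_Lp_mul_Lq univ x y hpq

theorem exists_norm_mul_norm_le_sum_mul {p q : ℝ≥0∞} [p.HolderConjugate q] (hp : p ≠ ∞)
    {x : ι → ℝ} (hx : x ≠ 0) :
    ∃ y : ι → ℝ, 0 < ∑ i, x i * y i ∧ ‖WithLp.toLp p x‖ * ‖WithLp.toLp q y‖ ≤ ∑ i, x i * y i := by
  set P := p.toReal
  have hP : 1 ≤ P := by
    simpa using ENNReal.toReal_mono hp (ENNReal.HolderConjugate.one_le p q)
  set S := ∑ i, |x i| ^ P
  set y : ι → ℝ := fun i => SignType.sign (x i) * |x i| ^ (P - 1)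
  have hxy (i : ι) : x i * y i = |x i| ^ P := by
    rcases eq_or_ne (x i) 0 with h | h
    · simp [y, h, Real.zero_rpow (by linarith : P ≠ 0)]
    · rw [← mul_assoc, self_mul_sign, ← Real.rpow_one_add' (abs_nonneg _) (ne_of_gt (by linarith))]
      ring_nf
  have hy (i : ι) : |y i| ≤ |x i| ^ (P - 1) := by
    rw [abs_mul, abs_of_nonneg (Real.rpow_nonneg (abs_nonneg _) _)]
    refine mul_le_of_le_one_left (Real.rpow_nonneg (abs_nonneg _) _) ?_
    rcases lt_trichotomy (x i) 0 with h | h | h <;> simp [h]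
  have hS : 0 < S := by
    obtain ⟨i, hi⟩ := Function.ne_iff.1 hx
    exact sum_pos' (fun j _ => Real.rpow_nonneg (abs_nonneg _) _)
      ⟨i, mem_univ i, Real.rpow_pos_of_pos (abs_pos.2 hi) _⟩
  have hy_norm : ‖WithLp.toLp q y‖ ≤ S ^ (1 - 1 / P) := by
    by_cases hq : q = ∞
    · obtain rfl := hq
      obtain rfl := (ENNReal.HolderConjugate.eq_top_iff_eq_one ∞ p).1 rfl
      simp only [P, ENNReal.toReal_one, div_one, sub_self, Real.rpow_zero, norm_toLp] at hy ⊢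
      exact (pi_norm_le_iff_of_nonneg zero_le_one).2 hy
    have hPQ := ENNReal.HolderConjugate.toReal_of_ne_top hp hq
    rw [norm_eq_sum hPQ.symm.pos,
      show 1 - 1 / P = 1 / q.toReal by rw [one_div, one_div, hPQ.one_sub_inv]]
    refine Real.rpow_le_rpow (by positivity) (sum_le_sum fun i _ => ?_) hPQ.symm.one_div_nonneg
    calc ‖y i‖ ^ q.toReal ≤ (|x i| ^ (P - 1)) ^ q.toReal := by gcongr; exact hy i
      _ = |x i| ^ P := by rw [← Real.rpow_mul (abs_nonneg _), hPQ.sub_one_mul_conj]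
  refine ⟨y, ?_⟩
  simp only [hxy]
  refine ⟨hS, ?_⟩
  have hx_norm : ‖WithLp.toLp p x‖ = S ^ (1 / P) := norm_eq_sum (by linarith) _
  calc ‖WithLp.toLp p x‖ * ‖WithLp.toLp q y‖ ≤ S ^ (1 / P) * S ^ (1 - 1 / P) := by
        rw [hx_norm]
        gcongr
    _ = S := by rw [← Real.rpow_add hS]; simp

theorem infDist_setOf_sum_mul_eq {p q : ℝ≥0∞} [Fact (1 ≤ q)] [p.HolderConjugate q] (hp : p ≠ ∞)
    {w : ι → ℝ} (hw : w ≠ 0) (x : PiLp q fun _ : ι => ℝ) (c : ℝ) :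
    Metric.infDist x {z : PiLp q fun _ : ι => ℝ | ∑ i, w i * z i = c} =
      |c - ∑ i, w i * x i| / ‖WithLp.toLp p w‖ := by
  obtain ⟨y, hy₀, hy⟩ := exists_norm_mul_norm_le_sum_mul (q := q) hp hw
  exact infDist_setOf_eq_abs_sub_div
    (dotProductBilin ℝ ℝ w ∘ₗ (WithLp.linearEquiv q ℝ (ι → ℝ)).toLinearMap)
    (fun z => sum_mul_le_norm_mul_norm (q := q) w z) (y₀ := WithLp.toLp q y) hy₀ hy x c

end PiLp

section Configuration

variable {d : ℕ} {a : Fin d → ℝ} {abar : ℝ}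

theorem sum_inv_sqrt_add_mean_sub (hd : 1 ≤ d) (habar : abar = 1 / d * ∑ j, a j) :
    ∑ j, (1 / √(d : ℝ) + abar - a j) = √(d : ℝ) := by
  have hd₀ : (0 : ℝ) < d := by exact_mod_cast hd
  have hsum : ∑ j, a j = d * abar := by rw [habar]; field_simp
  simp only [sum_sub_distrib, sum_add_distrib, sum_const, card_univ, Fintype.card_fin,
    nsmul_eq_mul, hsum]
  field_simp
  linear_combination (-1 : ℝ) * Real.sq_sqrt hd₀.le

theorem one_div_sub_div_eq_div_mul (hd : 1 ≤ d) {R : ℝ} (hR : R ≠ 0) (hS : √(d : ℝ) + d * abar ≠ 0)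
    (t : ℝ) :
    1 / R - d * t / (R * √(d : ℝ) + d * R * abar) =
      d / (R * (√(d : ℝ) + d * abar)) * (1 / √(d : ℝ) + abar - t) := by
  have hd₀ : (0 : ℝ) < d := by exact_mod_cast hd
  have hsd : √(d : ℝ) ≠ 0 := (Real.sqrt_pos.2 hd₀).ne'
  rw [show R * √(d : ℝ) + d * R * abar = R * (√(d : ℝ) + d * abar) by ring]
  field_simp
  linear_combination Real.sq_sqrt hd₀.le

theorem sum_mul_vertex_add_mul_center (hd : 1 ≤ d) (habar : abar = 1 / d * ∑ j, a j)
    {R lam : ℝ} (hR : R ≠ 0) (hS : √(d : ℝ) + d * abar ≠ 0) (i : Fin d) :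
    ∑ j, d / (R * (√(d : ℝ) + d * abar)) * (1 / √(d : ℝ) + abar - a j) *
        ((if j = i then R else 0) + (a i - lam) * (R / √(d : ℝ))) =
      1 - d * lam / (√(d : ℝ) + d * abar) := by
  have hd₀ : (0 : ℝ) < d := by exact_mod_cast hd
  have hsd : √(d : ℝ) ≠ 0 := (Real.sqrt_pos.2 hd₀).ne'
  simp only [mul_add, sum_add_distrib, mul_ite, mul_zero, sum_ite_eq', mem_univ, if_true,
    ← sum_mul, ← mul_sum, sum_inv_sqrt_add_mean_sub hd habar]
  field_simp
  linear_combination (-1 : ℝ) * Real.sq_sqrt hd₀.le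

end Configuration

theorem lp_dist_support_to_hyperplane_general (d : ℕ) (hd : 1 ≤ d)
    (p : ℝ≥0∞) [Fact (1 ≤ p)]
    (q : ℝ) (hq : 1 ≤ q) (hpq : 1 / p + 1 / ENNReal.ofReal q = 1)
    (R r : ℝ) (hR : 0 < R) (hr : 0 < r)
    (a : Fin d → ℝ) (ha : ∀ i, a i ∈ Set.Icc (0 : ℝ) 1)
    (abar : ℝ) (habar : abar = (1 / (d : ℝ)) * ∑ i, a i)
    (lam : ℝ)
    (hlam : lam = (r / R) * (∑ i, |1 / Real.sqrt d + abar - a i| ^ q) ^ (1 / q))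
    (v : Fin d → Fin d → ℝ) (hv : ∀ i j, v i j = if j = i then R else 0)
    (u : Fin d → ℝ) (hu : ∀ j, u j = R / Real.sqrt d)
    (w : Fin d → ℝ)
    (hw : ∀ i, w i = 1 / R - (d : ℝ) * a i / (R * Real.sqrt d + (d : ℝ) * R * abar))
    (i : Fin d) :
    Metric.infDist
      ((WithLp.equiv p (Fin d → ℝ)).symm (fun j => v i j + (a i - lam) * u j))
      {z : PiLp p (fun _ : Fin d => ℝ) |
        ∑ j, w j * (WithLp.equiv p (Fin d → ℝ)) z j = 1} = r := by
  have : (ENNReal.ofReal q).HolderConjugate p :=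
    ENNReal.holderConjugate_iff.2 (by simpa only [one_div, add_comm] using hpq)
  have : Fact (1 ≤ ENNReal.ofReal q) := ⟨ENNReal.HolderConjugate.one_le _ p⟩
  have hd₀ : (0 : ℝ) < d := by exact_mod_cast hd
  have hS : 0 < √(d : ℝ) + d * abar := by
    have : 0 ≤ abar := habar ▸ mul_nonneg (by positivity) (sum_nonneg fun j _ => (ha j).1)
    positivity
  set c : Fin d → ℝ := fun j => 1 / √(d : ℝ) + abar - a j
  have hwc : w = (d / (R * (√(d : ℝ) + d * abar))) • c :=
    funext fun j => (hw j).trans (one_div_sub_div_eq_div_mul hd hR.ne' hS.ne' (a j))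
  have hc : c ≠ 0 := fun h => by
    have hsum : ∑ j, c j = √(d : ℝ) := sum_inv_sqrt_add_mean_sub hd habar
    rw [h] at hsum
    simp only [Pi.zero_apply, sum_const_zero] at hsum
    exact (Real.sqrt_pos.2 hd₀).ne' hsum.symm
  have hlam' : lam = r / R * ‖WithLp.toLp (ENNReal.ofReal q) c‖ := by
    have hq' : (ENNReal.ofReal q).toReal = q := ENNReal.toReal_ofReal (by linarith)
    rw [hlam, PiLp.norm_eq_sum (by linarith), hq']
    rfl
  have hN : 0 < ‖WithLp.toLp (ENNReal.ofReal q) c‖ :=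
    norm_pos_iff.2 (mt (WithLp.toLp_eq_zero _).1 hc)
  refine (PiLp.infDist_setOf_sum_mul_eq (p := ENNReal.ofReal q) ENNReal.ofReal_ne_top
    (hwc ▸ smul_ne_zero (by positivity) hc) _ 1).trans ?_
  change |1 - ∑ j, w j * (v i j + (a i - lam) * u j)| / _ = r
  simp only [hv, hu, hwc, Pi.smul_apply, smul_eq_mul]
  rw [sum_mul_vertex_add_mul_center hd habar hR.ne' hS.ne', WithLp.toLp_smul, norm_smul,
    hlam', sub_sub_cancel, Real.norm_eq_abs, abs_of_pos (by positivity),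
    abs_of_pos (by positivity)]
  field_simp

/-- In the setup of Statement 6, with `p ∈ (1,∞]`, real dual exponent `q`,
and `λ = (r/R)(Σᵢ |1/√d + ā - aᵢ|^q)^{1/q}`, the ℓ_p distance from the point
`xᵢ = vᵢ + (aᵢ - λ) u` to the hyperplane `H = {z : ⟨w,z⟩ = 1}` equals exactly `r`. -/
theorem lp_dist_support_to_hyperplane (d : ℕ) (hd : 1 ≤ d)
    (p : ℝ≥0∞) [Fact (1 ≤ p)] (hp : 1 < p)
    (q : ℝ) (hq : 1 ≤ q) (hpq : 1 / p + 1 / ENNReal.ofReal q = 1)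
    (R r : ℝ) (hR : 0 < R) (hr : 0 < r)
    (a : Fin d → ℝ) (ha : ∀ i, a i ∈ Set.Icc (0 : ℝ) 1)
    (abar : ℝ) (habar : abar = (1 / (d : ℝ)) * ∑ i, a i)
    (lam : ℝ)
    (hlam : lam = (r / R) * (∑ i, |1 / Real.sqrt d + abar - a i| ^ q) ^ (1 / q))
    (halam : ∀ i, lam < a i)
    (v : Fin d → Fin d → ℝ) (hv : ∀ i j, v i j = if j = i then R else 0)
    (u : Fin d → ℝ) (hu : ∀ j, u j = R / Real.sqrt d)
    (w : Fin d → ℝ)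
    (hw : ∀ i, w i = 1 / R - (d : ℝ) * a i / (R * Real.sqrt d + (d : ℝ) * R * abar))
    (i : Fin d) :
    Metric.infDist
      ((WithLp.equiv p (Fin d → ℝ)).symm (fun j => v i j + (a i - lam) * u j))
      {z : PiLp p (fun _ : Fin d => ℝ) |
        ∑ j, w j * (WithLp.equiv p (Fin d → ℝ)) z j = 1} = r :=
  lp_dist_support_to_hyperplane_general d hd p q hq hpq R r hR hr a ha abar habar lam hlam v hv u hu
    w hw i
end

section
/- In the perceptron setting above, after t updates the weight vector wₜ satisfies ⟨u, wₜ⟩ ≥ tγ and ‖wₜ‖ ≤ R√t. -/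
open scoped RealInnerProductSpace

/-- In the perceptron setting, after `t` updates the weight vector
satisfies `⟪u, wₜ⟫ ≥ t γ` and `‖wₜ‖ ≤ R √t`. -/
theorem perceptron_weight_bounds {H : Type*} [NormedAddCommGroup H]
    [InnerProductSpace ℝ H]
    (u : H) (hu : ‖u‖ = 1) (γ R : ℝ) (hγ : 0 < γ) (hR : 0 < R)
    (z : ℕ → H) (y : ℕ → ℝ) (hy : ∀ s, y s = 1 ∨ y s = -1)
    (hz : ∀ s, ‖z s‖ ≤ R) (hmargin : ∀ s, γ ≤ ⟪u, y s • z s⟫)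
    (t : ℕ) (w : ℕ → H) (hw0 : w 0 = 0)
    (hupd : ∀ s < t, ⟪w s, y s • z s⟫ ≤ 0 ∧ w (s + 1) = w s + y s • z s) :
    (t : ℝ) * γ ≤ ⟪u, w t⟫ ∧ ‖w t‖ ≤ R * Real.sqrt t := by
  have key : (t : ℝ) * γ ≤ ⟪u, w t⟫ ∧ ‖w t‖ ^ 2 ≤ R ^ 2 * t := by
    induction t with
    | zero => simp [hw0]
    | succ n ih =>
      obtain ⟨h1, h2⟩ := ih (fun s hs => hupd s (Nat.lt_succ_of_lt hs))
      obtain ⟨hle, heq⟩ := hupd n (Nat.lt_succ_self n)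
      constructor
      · rw [heq, inner_add_right]
        push_cast
        nlinarith [hmargin n]
      · have hnorm : ‖y n • z n‖ ≤ R := by
          rcases hy n with h | h <;> simp [h, norm_smul, hz n]
        have expand : ‖w (n+1)‖ ^ 2 = ‖w n‖ ^ 2 + 2 * ⟪w n, y n • z n⟫ + ‖y n • z n‖ ^ 2 := by
          rw [heq]
          rw [@norm_add_sq_real]
        rw [expand]
        push_cast
        nlinarith [norm_nonneg (y n • z n)]
  refine ⟨key.1, ?_⟩
  have h := key.2
  have : ‖w t‖ ≤ Real.sqrt (R ^ 2 * t) := by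
    rw [show ‖w t‖ = Real.sqrt (‖w t‖ ^ 2) by rw [Real.sqrt_sq (norm_nonneg _)]]
    exact Real.sqrt_le_sqrt h
  calc ‖w t‖ ≤ Real.sqrt (R ^ 2 * t) := this
    _ = R * Real.sqrt t := by
        rw [Real.sqrt_mul (by positivity), Real.sqrt_sq hR.le]
end

section
/- Let D be a distribution over ℝ^d × {±1} that is linearly r-separated with robust margin γ_r > 0 by a hyperplane through the origin (there exists a unit vector u with ⟨u, y z⟩ ≥ γ_r for all (x,y) in the support and all z with ‖z - x‖_p ≤ r), and suppose all adversarially perturbed points z satisfy ‖z‖₂ ≤ R. Then the modified adversarial perceptron (which trains on a uniformly random prefix of length k ∈ {0,…,n} of an i.i.d. sample of size n) has expected robust loss at most R²/(γ_r²(n+1)). -/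
open Finset MeasureTheory
open scoped ENNReal

/-- The standard inner product on `ℝ^d`. -/
def dotp {d : ℕ} (w x : Fin d → ℝ) : ℝ := ∑ i, w i * x i

/-- The Euclidean (ℓ₂) norm on `ℝ^d`. -/
noncomputable def enorm2 {d : ℕ} (x : Fin d → ℝ) : ℝ := Real.sqrt (∑ i, x i ^ 2)

/-- The ℓ_p norm on `ℝ^d`. -/
noncomputable def pnorm (p : ℝ≥0∞) [Fact (1 ≤ p)] {d : ℕ} (x : Fin d → ℝ) : ℝ :=
  ‖(WithLp.equiv p (Fin d → ℝ)).symm x‖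

/-- The weight vectors produced by the adversarial perceptron run on the stream `s`,
using the adversarial-attack oracle `adv`: `advW adv s k` is the weight vector after
processing the first `k` points.  At each step the current point is attacked; if the
adversarial example is misclassified a perceptron update is performed with it. -/
noncomputable def advW {d : ℕ}
    (adv : (Fin d → ℝ) → (Fin d → ℝ) → ℝ → (Fin d → ℝ))
    (s : ℕ → (Fin d → ℝ) × ℝ) : ℕ → (Fin d → ℝ)
  | 0 => 0
  | t + 1 =>
    let w := advW adv s t
    let z := adv w (s t).1 (s t).2
    if (s t).2 * dotp w z ≤ 0 then w + (s t).2 • z else w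

/-- The robust loss at radius `r` (in the ℓ_p norm) of the linear classifier with
weight vector `w` (through the origin) with respect to the distribution `D`. -/
noncomputable def robustLoss (p : ℝ≥0∞) [Fact (1 ≤ p)] {d : ℕ}
    (D : Measure ((Fin d → ℝ) × ℝ)) (r : ℝ) (w : Fin d → ℝ) : ℝ :=
  (D {xy | ∃ z, pnorm p (z - xy.1) ≤ r ∧
      (if 0 ≤ dotp w z then (1 : ℝ) else -1) ≠ xy.2}).toReal


/-!
Novikoff's argument: if every attacked point `z` used for an update satisfies `γ ≤ y⟪u, z⟫` and
`‖z‖ ≤ R`, each update raises `⟪u, w⟫` by at least `γ` and `‖w‖²` by at most `R²`, so after `M`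
updates `γ M ≤ ⟪u, w⟫ ≤ ‖w‖ ≤ √M R`, i.e. `M ≤ R²/γ²`.

Because the adversary returns the worst point of the `r`-ball, a robust error of `w` at `(x, y)`
forces an update at `(x, y)`; so the robust loss of `w_k` is at most the probability that a fresh
point triggers an update. As `w_k` only depends on the first `k` points, this is the probability
of an update at step `k` of a run on `n + 1` i.i.d. points, and summing over `k ≤ n` gives the
expected number of updates on `n + 1` points, which is at most `R²/γ²`.
-/

section Samples

variable {α : Type*} {n : ℕ}

-- The filler `a` is never read by a run of at most `n` steps.
def padStream (s : Fin n → α) (a : α) : ℕ → α := fun t => if h : t < n then s ⟨t, h⟩ else a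

lemma padStream_of_lt (s : Fin n → α) (a : α) {t : ℕ} (ht : t < n) :
    padStream s a t = s ⟨t, ht⟩ :=
  dif_pos ht

lemma padStream_insertNth_of_lt (k : Fin (n + 1)) (x : α) (s : Fin n → α) (a : α) {t : ℕ}
    (ht : t < k) : padStream (k.insertNth x s) a t = padStream s a t := by
  have htn : t < n := ht.trans_le (Nat.lt_succ_iff.mp k.isLt)
  rw [padStream_of_lt _ _ (htn.trans n.lt_succ_self), padStream_of_lt _ _ htn]
  have h := Fin.insertNth_apply_succAbove (α := fun _ => α) k x s ⟨t, htn⟩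
  rwa [Fin.succAbove_of_castSucc_lt k ⟨t, htn⟩ ht] at h

lemma padStream_insertNth_self (k : Fin (n + 1)) (x : α) (s : Fin n → α) (a : α) :
    padStream (k.insertNth x s) a k = x := by
  rw [padStream_of_lt _ _ k.isLt]
  exact Fin.insertNth_apply_same (α := fun _ => α) k x s

lemma measurable_padStream_apply [MeasurableSpace α] (a : α) (t : ℕ) :
    Measurable fun s : Fin n → α => padStream s a t := by
  unfold padStream
  split_ifs
  · exact measurable_pi_apply _
  · exact measurable_const

lemma integral_pi_eq_integral_integral_insertNth {E : Type*} [NormedAddCommGroup E]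
    [NormedSpace ℝ E] [MeasurableSpace α] (μ : Measure α) [SigmaFinite μ] (k : Fin (n + 1))
    {f : (Fin (n + 1) → α) → E} (hf : Integrable f (Measure.pi fun _ => μ)) :
    ∫ s', f s' ∂(Measure.pi fun _ => μ) =
      ∫ s, ∫ x, f (k.insertNth x s) ∂μ ∂(Measure.pi fun _ => μ) := by
  have he := (measurePreserving_piFinSuccAbove (fun _ => μ) k).symm
  have hf' := (he.integrable_comp_emb (MeasurableEquiv.measurableEmbedding _)).mpr hf
  rw [← he.integral_comp']
  exact integral_prod_symm _ hf'

end Samples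

section AdversarialPerceptron

variable {d : ℕ}

lemma dotp_add_right (w x y : Fin d → ℝ) : dotp w (x + y) = dotp w x + dotp w y := by
  simp only [dotp, Pi.add_apply, mul_add, sum_add_distrib]

lemma dotp_smul_right (w : Fin d → ℝ) (c : ℝ) (x : Fin d → ℝ) :
    dotp w (c • x) = c * dotp w x := by
  simp only [dotp, Pi.smul_apply, smul_eq_mul, mul_sum]
  exact sum_congr rfl fun _ _ => by ring

lemma dotp_le_enorm2_mul_enorm2 (u w : Fin d → ℝ) : dotp u w ≤ enorm2 u * enorm2 w :=
  Real.sum_mul_le_sqrt_mul_sqrt _ _ _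

lemma enorm2_sq (x : Fin d → ℝ) : enorm2 x ^ 2 = ∑ i, x i ^ 2 :=
  Real.sq_sqrt (sum_nonneg fun _ _ => sq_nonneg _)

lemma enorm2_add_smul_sq (w z : Fin d → ℝ) (c : ℝ) :
    enorm2 (w + c • z) ^ 2 = enorm2 w ^ 2 + 2 * c * dotp w z + c ^ 2 * enorm2 z ^ 2 := by
  simp only [enorm2_sq, dotp, Pi.add_apply, Pi.smul_apply, smul_eq_mul, mul_sum,
    ← sum_add_distrib]
  exact sum_congr rfl fun _ _ => by ring

variable (adv : (Fin d → ℝ) → (Fin d → ℝ) → ℝ → (Fin d → ℝ))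

def mistakeSet (w : Fin d → ℝ) : Set ((Fin d → ℝ) × ℝ) :=
  {xy | xy.2 * dotp w (adv w xy.1 xy.2) ≤ 0}

noncomputable def mistakeCount (s : ℕ → (Fin d → ℝ) × ℝ) (m : ℕ) : ℝ :=
  ∑ t ∈ range m, (mistakeSet adv (advW adv s t)).indicator 1 (s t)

variable {adv}

lemma advW_succ_of_mem {s : ℕ → (Fin d → ℝ) × ℝ} {t : ℕ}
    (h : s t ∈ mistakeSet adv (advW adv s t)) :
    advW adv s (t + 1) = advW adv s t + (s t).2 • adv (advW adv s t) (s t).1 (s t).2 :=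
  if_pos h

lemma advW_succ_of_notMem {s : ℕ → (Fin d → ℝ) × ℝ} {t : ℕ}
    (h : s t ∉ mistakeSet adv (advW adv s t)) :
    advW adv s (t + 1) = advW adv s t :=
  if_neg h

lemma advW_congr {s s' : ℕ → (Fin d → ℝ) × ℝ} {k : ℕ} (h : ∀ t < k, s t = s' t) :
    advW adv s k = advW adv s' k := by
  induction k with
  | zero => rfl
  | succ t ih =>
    simp only [advW, ih fun m hm => h m (hm.trans t.lt_succ_self), h t t.lt_succ_self]

lemma mistakeCount_nonneg (s : ℕ → (Fin d → ℝ) × ℝ) (m : ℕ) : 0 ≤ mistakeCount adv s m :=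
  sum_nonneg fun _ _ => Set.indicator_nonneg (fun _ _ => zero_le_one) _

lemma perceptron_invariant {u : Fin d → ℝ} {γ R : ℝ} {s : ℕ → (Fin d → ℝ) × ℝ} {m : ℕ}
    (h : ∀ t < m, ((s t).2 = 1 ∨ (s t).2 = -1) ∧
      γ ≤ (s t).2 * dotp u (adv (advW adv s t) (s t).1 (s t).2) ∧
      enorm2 (adv (advW adv s t) (s t).1 (s t).2) ≤ R) :
    γ * mistakeCount adv s m ≤ dotp u (advW adv s m) ∧
      enorm2 (advW adv s m) ^ 2 ≤ mistakeCount adv s m * R ^ 2 := by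
  induction m with
  | zero => simp [mistakeCount, advW, dotp, enorm2]
  | succ m ih =>
    obtain ⟨ih_dotp, ih_norm⟩ := ih fun t ht => h t (ht.trans m.lt_succ_self)
    obtain ⟨hy, hmargin, hbound⟩ := h m m.lt_succ_self
    have hy_sq : (s m).2 ^ 2 = 1 := by rcases hy with hy | hy <;> simp [hy]
    rw [mistakeCount, sum_range_succ, ← mistakeCount]
    by_cases hmis : s m ∈ mistakeSet adv (advW adv s m)
    · have hz_sq := pow_le_pow_left₀ (by unfold enorm2; positivity) hbound 2
      have hupdate : (s m).2 * dotp (advW adv s m) (adv (advW adv s m) (s m).1 (s m).2) ≤ 0 :=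
        hmis
      rw [advW_succ_of_mem hmis, Set.indicator_of_mem hmis, Pi.one_apply, dotp_add_right,
        dotp_smul_right, enorm2_add_smul_sq, hy_sq]
      constructor <;> nlinarith
    · rw [advW_succ_of_notMem hmis, Set.indicator_of_notMem hmis, add_zero]
      exact ⟨ih_dotp, ih_norm⟩

lemma mistakeCount_le {u : Fin d → ℝ} {γ R : ℝ} (hγ : 0 < γ) (hu : enorm2 u = 1)
    {s : ℕ → (Fin d → ℝ) × ℝ} {m : ℕ}
    (h : ∀ t < m, ((s t).2 = 1 ∨ (s t).2 = -1) ∧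
      γ ≤ (s t).2 * dotp u (adv (advW adv s t) (s t).1 (s t).2) ∧
      enorm2 (adv (advW adv s t) (s t).1 (s t).2) ≤ R) :
    mistakeCount adv s m ≤ R ^ 2 / γ ^ 2 := by
  obtain ⟨h_dotp, h_norm⟩ := perceptron_invariant h
  set M := mistakeCount adv s m
  have hM : 0 ≤ M := mistakeCount_nonneg s m
  have hsq : (γ * M) ^ 2 ≤ M * R ^ 2 := calc
    (γ * M) ^ 2 ≤ enorm2 (advW adv s m) ^ 2 := by
      refine pow_le_pow_left₀ (by positivity) ?_ 2
      simpa [hu] using h_dotp.trans (dotp_le_enorm2_mul_enorm2 u _)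
    _ ≤ M * R ^ 2 := h_norm
  rcases hM.eq_or_lt with hM0 | hM0
  · rw [← hM0]; positivity
  · rw [le_div_iff₀ (by positivity)]
    nlinarith

lemma mem_mistakeSet_of_misclassified {w x z : Fin d → ℝ} {y : ℝ}
    (hy : y = 1 ∨ y = -1) (hopt : y * dotp w (adv w x y) ≤ y * dotp w z)
    (hmis : (if 0 ≤ dotp w z then (1 : ℝ) else -1) ≠ y) : (x, y) ∈ mistakeSet adv w := by
  refine hopt.trans ?_
  split_ifs at hmis <;> rcases hy with rfl | rfl <;> first | exact absurd rfl hmis | linarith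

lemma robustLoss_le_measureReal_mistakeSet (p : ℝ≥0∞) [Fact (1 ≤ p)] {r : ℝ}
    {D : Measure ((Fin d → ℝ) × ℝ)} [IsFiniteMeasure D]
    (hlabel : ∀ᵐ xy ∂D, xy.2 = 1 ∨ xy.2 = -1)
    (hopt : ∀ w x y z, pnorm p (z - x) ≤ r → y * dotp w (adv w x y) ≤ y * dotp w z)
    (w : Fin d → ℝ) : robustLoss p D r w ≤ D.real (mistakeSet adv w) := by
  refine ENNReal.toReal_mono (measure_ne_top _ _) (measure_mono_ae ?_)
  filter_upwards [hlabel] with xy hy ⟨z, hz, hmis⟩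
  exact mem_mistakeSet_of_misclassified hy (hopt w xy.1 xy.2 z hz) hmis

section Measurability

variable {β : Type*} [MeasurableSpace β]

lemma measurableSet_mem_mistakeSet
    (hadv : Measurable fun q : (Fin d → ℝ) × (Fin d → ℝ) × ℝ => adv q.1 q.2.1 q.2.2)
    {w : β → Fin d → ℝ} {xy : β → (Fin d → ℝ) × ℝ} (hw : Measurable w) (hxy : Measurable xy) :
    MeasurableSet {b | xy b ∈ mistakeSet adv (w b)} := by
  have hdotp : ∀ {f g : β → Fin d → ℝ}, Measurable f → Measurable g →
      Measurable fun b => dotp (f b) (g b) := fun hf hg =>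
    Finset.measurable_sum _ fun i _ => ((measurable_pi_apply i).comp hf).mul
      ((measurable_pi_apply i).comp hg)
  exact measurableSet_le (hxy.snd.mul (hdotp hw (hadv.comp (hw.prodMk hxy)))) measurable_const

lemma measurable_advW
    (hadv : Measurable fun q : (Fin d → ℝ) × (Fin d → ℝ) × ℝ => adv q.1 q.2.1 q.2.2)
    {s : β → ℕ → (Fin d → ℝ) × ℝ} (hs : ∀ t, Measurable fun b => s b t) (k : ℕ) :
    Measurable fun b => advW adv (s b) k := by
  induction k with
  | zero => exact measurable_const
  | succ t ih =>
    exact Measurable.ite (measurableSet_mem_mistakeSet hadv ih (hs t))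
      (ih.add ((hs t).snd.smul (hadv.comp (ih.prodMk (hs t))))) ih

lemma integrable_indicator_mistakeSet
    (hadv : Measurable fun q : (Fin d → ℝ) × (Fin d → ℝ) × ℝ => adv q.1 q.2.1 q.2.2)
    {μ : Measure β} [IsFiniteMeasure μ]
    {w : β → Fin d → ℝ} {xy : β → (Fin d → ℝ) × ℝ} (hw : Measurable w) (hxy : Measurable xy) :
    Integrable (fun b => (mistakeSet adv (w b)).indicator (1 : (Fin d → ℝ) × ℝ → ℝ) (xy b)) μ := by
  have hfun : (fun b => (mistakeSet adv (w b)).indicator (1 : (Fin d → ℝ) × ℝ → ℝ) (xy b)) =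
      {b | xy b ∈ mistakeSet adv (w b)}.indicator 1 := by
    ext b
    by_cases h : xy b ∈ mistakeSet adv (w b) <;> simp [h]
  have hmeas := hfun ▸ measurable_one.indicator (measurableSet_mem_mistakeSet hadv hw hxy)
  exact .of_bound hmeas.aestronglyMeasurable 1 (ae_of_all _ fun b =>
    (norm_indicator_le_norm_self _ _).trans (by simp))

lemma integrable_measureReal_mistakeSet
    (hadv : Measurable fun q : (Fin d → ℝ) × (Fin d → ℝ) × ℝ => adv q.1 q.2.1 q.2.2)
    {μ : Measure β} [IsFiniteMeasure μ] (D : Measure ((Fin d → ℝ) × ℝ)) [IsProbabilityMeasure D]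
    {w : β → Fin d → ℝ} (hw : Measurable w) :
    Integrable (fun b => D.real (mistakeSet adv (w b))) μ := by
  have hmeas : Measurable fun b => D (mistakeSet adv (w b)) :=
    measurable_measure_prodMk_left
      (measurableSet_mem_mistakeSet hadv (hw.comp measurable_fst) measurable_snd)
  exact .of_bound hmeas.ennreal_toReal.aestronglyMeasurable 1 (ae_of_all _ fun b => by
    rw [Real.norm_of_nonneg measureReal_nonneg]; exact measureReal_le_one)

lemma integral_robustLoss_le (p : ℝ≥0∞) [Fact (1 ≤ p)] {r : ℝ}
    (hadv : Measurable fun q : (Fin d → ℝ) × (Fin d → ℝ) × ℝ => adv q.1 q.2.1 q.2.2)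
    {D : Measure ((Fin d → ℝ) × ℝ)} [IsProbabilityMeasure D]
    (hlabel : ∀ᵐ xy ∂D, xy.2 = 1 ∨ xy.2 = -1)
    (hopt : ∀ w x y z, pnorm p (z - x) ≤ r → y * dotp w (adv w x y) ≤ y * dotp w z)
    {μ : Measure β} [IsFiniteMeasure μ] {w : β → Fin d → ℝ} (hw : Measurable w) :
    ∫ b, robustLoss p D r (w b) ∂μ ≤ ∫ b, D.real (mistakeSet adv (w b)) ∂μ :=
  integral_mono_of_nonneg (ae_of_all _ fun _ => ENNReal.toReal_nonneg)
    (integrable_measureReal_mistakeSet hadv D hw)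
    (ae_of_all _ fun _ => robustLoss_le_measureReal_mistakeSet p hlabel hopt _)

end Measurability

section OnlineToBatch

variable {n : ℕ}

lemma advW_padStream_insertNth (k : Fin (n + 1)) (x : (Fin d → ℝ) × ℝ)
    (s : Fin n → (Fin d → ℝ) × ℝ) (a : (Fin d → ℝ) × ℝ) :
    advW adv (padStream (k.insertNth x s) a) k = advW adv (padStream s a) k :=
  advW_congr fun _ ht => padStream_insertNth_of_lt k x s a ht

lemma integral_measureReal_mistakeSet_advW
    (hadv : Measurable fun q : (Fin d → ℝ) × (Fin d → ℝ) × ℝ => adv q.1 q.2.1 q.2.2)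
    (D : Measure ((Fin d → ℝ) × ℝ)) [IsProbabilityMeasure D] (a : (Fin d → ℝ) × ℝ)
    (k : Fin (n + 1)) :
    ∫ s : Fin n → _, D.real (mistakeSet adv (advW adv (padStream s a) k))
        ∂(Measure.pi fun _ => D) =
      ∫ s' : Fin (n + 1) → _,
        (mistakeSet adv (advW adv (padStream s' a) k)).indicator 1 (padStream s' a k)
        ∂(Measure.pi fun _ => D) := by
  have hW := measurable_advW hadv (measurable_padStream_apply (n := n + 1) a) k
  rw [integral_pi_eq_integral_integral_insertNth D k
    (integrable_indicator_mistakeSet hadv hW (measurable_padStream_apply a k))]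
  refine integral_congr_ae (ae_of_all _ fun s => ?_)
  simp only [padStream_insertNth_self, advW_padStream_insertNth]
  exact (integral_indicator_one (measurableSet_mem_mistakeSet hadv measurable_const
    measurable_id)).symm

lemma integral_mistakeCount_eq_sum
    (hadv : Measurable fun q : (Fin d → ℝ) × (Fin d → ℝ) × ℝ => adv q.1 q.2.1 q.2.2)
    (D : Measure ((Fin d → ℝ) × ℝ)) [IsProbabilityMeasure D] (a : (Fin d → ℝ) × ℝ) :
    ∫ s' : Fin (n + 1) → _, mistakeCount adv (padStream s' a) (n + 1) ∂(Measure.pi fun _ => D) =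
      ∑ k ∈ range (n + 1), ∫ s : Fin n → _, D.real (mistakeSet adv (advW adv (padStream s a) k))
        ∂(Measure.pi fun _ => D) := by
  unfold mistakeCount
  rw [integral_finsetSum _ fun k _ => integrable_indicator_mistakeSet hadv
    (measurable_advW hadv (measurable_padStream_apply a) k) (measurable_padStream_apply a k)]
  exact sum_congr rfl fun k hk =>
    (integral_measureReal_mistakeSet_advW hadv D a ⟨k, mem_range.mp hk⟩).symm

end OnlineToBatch

lemma integral_mistakeCount_le (p : ℝ≥0∞) [Fact (1 ≤ p)] {r γ R : ℝ} (hγ : 0 < γ)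
    {D : Measure ((Fin d → ℝ) × ℝ)} [IsProbabilityMeasure D] {u : Fin d → ℝ} (hu : enorm2 u = 1)
    (hsep : ∀ᵐ xy ∂D, (xy.2 = 1 ∨ xy.2 = -1) ∧
      ∀ z, pnorm p (z - xy.1) ≤ r → γ ≤ xy.2 * dotp u z ∧ enorm2 z ≤ R)
    (hball : ∀ w x y, pnorm p (adv w x y - x) ≤ r) (a : (Fin d → ℝ) × ℝ) (m : ℕ) :
    ∫ s, mistakeCount adv (padStream s a) m ∂(Measure.pi fun _ : Fin m => D) ≤ R ^ 2 / γ ^ 2 := by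
  have hsep_all : ∀ᵐ s ∂(Measure.pi fun _ : Fin m => D), ∀ i, ((s i).2 = 1 ∨ (s i).2 = -1) ∧
      ∀ z, pnorm p (z - (s i).1) ≤ r → γ ≤ (s i).2 * dotp u z ∧ enorm2 z ≤ R :=
    ae_all_iff.mpr fun i =>
      (Measure.tendsto_eval_ae_ae (μ := fun _ => D) (i := i)).eventually hsep
  refine (integral_mono_of_nonneg (ae_of_all _ fun s => mistakeCount_nonneg _ _)
    (integrable_const (R ^ 2 / γ ^ 2)) ?_).trans_eq (by simp)
  filter_upwards [hsep_all] with s hs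
  refine mistakeCount_le hγ hu fun t ht => ?_
  rw [padStream_of_lt s a ht]
  obtain ⟨hy, hz⟩ := hs ⟨t, ht⟩
  exact ⟨hy, hz _ (hball _ _ _)⟩

end AdversarialPerceptron

theorem adversarial_perceptron_expected_robust_loss_general
    (d n : ℕ) (p : ℝ≥0∞) [Fact (1 ≤ p)]
    (r γ R : ℝ) (hγ : 0 < γ)
    (D : Measure ((Fin d → ℝ) × ℝ)) [IsProbabilityMeasure D]
    (u : Fin d → ℝ) (hu : enorm2 u = 1)
    (hsep : ∀ᵐ xy ∂D, (xy.2 = 1 ∨ xy.2 = -1) ∧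
      ∀ z, pnorm p (z - xy.1) ≤ r → γ ≤ xy.2 * dotp u z ∧ enorm2 z ≤ R)
    (adv : (Fin d → ℝ) → (Fin d → ℝ) → ℝ → (Fin d → ℝ))
    (hadv : ∀ w x y, pnorm p (adv w x y - x) ≤ r ∧
      ∀ z, pnorm p (z - x) ≤ r → y * dotp w (adv w x y) ≤ y * dotp w z)
    (hadvm : Measurable fun q : (Fin d → ℝ) × (Fin d → ℝ) × ℝ => adv q.1 q.2.1 q.2.2) :
    (1 / (n + 1 : ℝ)) * ∑ k ∈ Finset.range (n + 1),
      ∫ s : Fin n → (Fin d → ℝ) × ℝ,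
        robustLoss p D r (advW adv (fun t => if h : t < n then s ⟨t, h⟩ else (0, 1)) k)
        ∂(Measure.pi fun _ : Fin n => D)
    ≤ R ^ 2 / (γ ^ 2 * (n + 1)) := by
  calc _ ≤ (1 / (n + 1 : ℝ)) * ∑ k ∈ range (n + 1),
        ∫ s, D.real (mistakeSet adv (advW adv (padStream s (0, 1)) k))
          ∂(Measure.pi fun _ : Fin n => D) := by
        refine mul_le_mul_of_nonneg_left (sum_le_sum fun k _ => ?_) (by positivity)
        exact integral_robustLoss_le p hadvm (hsep.mono fun _ h => h.1)
          (fun w x y => (hadv w x y).2) (measurable_advW hadvm (measurable_padStream_apply _) k)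
    _ = (1 / (n + 1 : ℝ)) * ∫ s' : Fin (n + 1) → _, mistakeCount adv (padStream s' (0, 1)) (n + 1)
          ∂(Measure.pi fun _ => D) := by
        rw [integral_mistakeCount_eq_sum hadvm]
    _ ≤ (1 / (n + 1 : ℝ)) * (R ^ 2 / γ ^ 2) := by
        gcongr
        exact integral_mistakeCount_le p hγ hu hsep (fun w x y => (hadv w x y).1) _ _
    _ = R ^ 2 / (γ ^ 2 * (n + 1)) := by
        field_simp

/-- If `D` is linearly `r`-separated with robust margin `γ > 0` by a
hyperplane through the origin, and all adversarially perturbed points have ℓ₂ norm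
at most `R`, then the modified adversarial perceptron (trained on a uniformly random
prefix of length `k ∈ {0,…,n}` of an i.i.d. sample of size `n`) has expected robust
loss at most `R²/(γ²(n+1))`. -/
theorem adversarial_perceptron_expected_robust_loss
    (d n : ℕ) (p : ℝ≥0∞) [Fact (1 ≤ p)] (hp : 1 < p)
    (r γ R : ℝ) (hr : 0 < r) (hγ : 0 < γ) (hR : 0 < R)
    (D : Measure ((Fin d → ℝ) × ℝ)) [IsProbabilityMeasure D]
    (u : Fin d → ℝ) (hu : enorm2 u = 1)
    (hsep : ∀ᵐ xy ∂D, (xy.2 = 1 ∨ xy.2 = -1) ∧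
      ∀ z, pnorm p (z - xy.1) ≤ r → γ ≤ xy.2 * dotp u z ∧ enorm2 z ≤ R)
    (adv : (Fin d → ℝ) → (Fin d → ℝ) → ℝ → (Fin d → ℝ))
    (hadv : ∀ w x y, pnorm p (adv w x y - x) ≤ r ∧
      ∀ z, pnorm p (z - x) ≤ r → y * dotp w (adv w x y) ≤ y * dotp w z)
    (hadvm : Measurable fun q : (Fin d → ℝ) × (Fin d → ℝ) × ℝ => adv q.1 q.2.1 q.2.2) :
    (1 / (n + 1 : ℝ)) * ∑ k ∈ Finset.range (n + 1),
      ∫ s : Fin n → (Fin d → ℝ) × ℝ,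
        robustLoss p D r (advW adv (fun t => if h : t < n then s ⟨t, h⟩ else (0, 1)) k)
        ∂(Measure.pi fun _ : Fin n => D)
    ≤ R ^ 2 / (γ ^ 2 * (n + 1)) :=
  adversarial_perceptron_expected_robust_loss_general d n p r γ R hγ D u hu hsep adv hadv hadvm
end

section
/- Fix 0 < Δ < 1/√d and q ∈ (1, ∞). Define F(x, y, z) = ((1/√d - x)^q + (1/√d - 2Δ/3 + y)^q + (1/√d + 2Δ/3 + z)^q)^{1/q} for x, y, z ∈ [0, Δ/3]. Then there exist 1-Lipschitz, monotonically non-decreasing functions g₁, g₂ : [0, Δ/3] → [0, Δ/3] such that for all t ∈ [0, Δ/3]: g₁(t) + g₂(t) = t and F(t, g₁(t), g₂(t)) = F(0, 0, 0). -/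
/-!
Removing mass `t` from the first coordinate and splitting it as `y`, `t - y` between the other two,
the sum of the `q`-th powers is, by strict convexity of `x ↦ x ^ q`, strictly decreasing in `y`,
at least its initial value at `y = 0` and at most it at `y = t`; so a unique `g t` restores it.
Convexity also shows that the sum does not decrease when `t` grows with `y` fixed, and does not
increase when `t` and `y` grow by the same amount. By uniqueness, both `g` and `t ↦ t - g t` are
monotone, and two monotone functions adding up to the identity are `1`-Lipschitz.
-/

open Set

section Increments

variable {𝕜 : Type*} [Field 𝕜] [LinearOrder 𝕜] [IsStrictOrderedRing 𝕜] {s : Set 𝕜} {f : 𝕜 → 𝕜}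

theorem ConvexOn.map_sub_map_le_map_sub_map (hf : ConvexOn 𝕜 s f) {x x' y y' : 𝕜} (hx : x ∈ s)
    (hy' : y' ∈ s) (hxy : x ≤ y) (hxx' : x ≤ x') (hsub : x' - x = y' - y) :
    f x' - f x ≤ f y' - f y := by
  rcases hxy.eq_or_lt with rfl | hxy
  · obtain rfl : x' = y' := by linarith
    rfl
  have hd : 0 < y' - x := by linarith
  set μ := (x' - x) / (y' - x) with hμ_def
  have hμ₀ : 0 ≤ μ := div_nonneg (by linarith) hd.le
  have hμ₁ : 0 ≤ 1 - μ := sub_nonneg.2 ((div_le_one hd).2 (by linarith))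
  have h₁ := hf.2 hx hy' hμ₀ hμ₁ (add_sub_cancel μ 1)
  have h₂ := hf.2 hx hy' hμ₁ hμ₀ (sub_add_cancel 1 μ)
  have e₁ : μ * x + (1 - μ) * y' = y := by
    rw [hμ_def]; field_simp; linear_combination (x - y') * hsub
  have e₂ : (1 - μ) * x + μ * y' = x' := by
    rw [hμ_def]; field_simp; ring
  simp only [smul_eq_mul, e₁, e₂] at h₁ h₂
  linarith

theorem StrictConvexOn.map_sub_map_lt_map_sub_map (hf : StrictConvexOn 𝕜 s f) {x x' y y' : 𝕜}
    (hx : x ∈ s) (hy' : y' ∈ s) (hxy : x < y) (hxx' : x < x') (hsub : x' - x = y' - y) :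
    f x' - f x < f y' - f y := by
  have hd : 0 < y' - x := by linarith
  set μ := (x' - x) / (y' - x) with hμ_def
  have hμ₀ : 0 < μ := div_pos (by linarith) hd
  have hμ₁ : 0 < 1 - μ := sub_pos.2 ((div_lt_one hd).2 (by linarith))
  have hne : x ≠ y' := (show x < y' by linarith).ne
  have h₁ := hf.2 hx hy' hne hμ₀ hμ₁ (add_sub_cancel μ 1)
  have h₂ := hf.2 hx hy' hne hμ₁ hμ₀ (sub_add_cancel 1 μ)
  have e₁ : μ * x + (1 - μ) * y' = y := by
    rw [hμ_def]; field_simp; linear_combination (x - y') * hsub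
  have e₂ : (1 - μ) * x + μ * y' = x' := by
    rw [hμ_def]; field_simp; ring
  simp only [smul_eq_mul, e₁, e₂] at h₁ h₂
  linarith

end Increments

theorem lipschitzOnWith_one_of_monotoneOn_sub {g : ℝ → ℝ} {s : Set ℝ} (hg : MonotoneOn g s)
    (hg' : MonotoneOn (fun t => t - g t) s) : LipschitzOnWith 1 g s := by
  refine LipschitzOnWith.of_dist_le_mul fun x hx y hy => ?_
  wlog hxy : x ≤ y generalizing x y
  · rw [dist_comm, dist_comm x]
    exact this y hy x hx (le_of_not_ge hxy)
  rw [NNReal.coe_one, one_mul, dist_comm, dist_comm x, Real.dist_eq, Real.dist_eq,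
    abs_of_nonneg (sub_nonneg.2 (hg hx hy hxy)), abs_of_nonneg (sub_nonneg.2 hxy)]
  linarith [hg' hx hy hxy]

section LevelSelection

variable {φ : ℝ → ℝ → ℝ} {T : ℝ}

theorem exists_mem_Icc_eq_apply_zero_zero
    (hcont : ∀ t ∈ Icc 0 T, ContinuousOn (φ t) (Icc 0 t))
    (hmono : ∀ ⦃t s⦄, t ≤ s → s ≤ T → ∀ y ∈ Icc 0 t, φ t y ≤ φ s y)
    (hshift : ∀ ⦃t s⦄, t ≤ s → s ≤ T → ∀ y ∈ Icc 0 t, φ s (y + (s - t)) ≤ φ t y)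
    {t : ℝ} (ht : t ∈ Icc 0 T) : ∃ y ∈ Icc 0 t, φ t y = φ 0 0 := by
  have hupper : φ 0 0 ≤ φ t 0 := hmono ht.1 ht.2 0 (left_mem_Icc.2 le_rfl)
  have hlower : φ t t ≤ φ 0 0 := by
    simpa using hshift ht.1 ht.2 0 (left_mem_Icc.2 le_rfl)
  exact intermediate_value_Icc' ht.1 (hcont t ht) ⟨hlower, hupper⟩

theorem exists_monotoneOn_level_selection
    (hcont : ∀ t ∈ Icc 0 T, ContinuousOn (φ t) (Icc 0 t))
    (hanti : ∀ t ∈ Icc 0 T, StrictAntiOn (φ t) (Icc 0 t))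
    (hmono : ∀ ⦃t s⦄, t ≤ s → s ≤ T → ∀ y ∈ Icc 0 t, φ t y ≤ φ s y)
    (hshift : ∀ ⦃t s⦄, t ≤ s → s ≤ T → ∀ y ∈ Icc 0 t, φ s (y + (s - t)) ≤ φ t y) :
    ∃ g : ℝ → ℝ, (∀ t ∈ Icc 0 T, g t ∈ Icc 0 t ∧ φ t (g t) = φ 0 0) ∧
      MonotoneOn g (Icc 0 T) ∧ MonotoneOn (fun t => t - g t) (Icc 0 T) := by
  choose! g hg using fun t (ht : t ∈ Icc 0 T) =>
    exists_mem_Icc_eq_apply_zero_zero hcont hmono hshift ht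
  have hcompare : ∀ ⦃t⦄, t ∈ Icc 0 T → ∀ ⦃s⦄, s ∈ Icc 0 T → t ≤ s →
      g t ≤ g s ∧ g s ≤ g t + (s - t) := by
    intro t ht s hs hts
    obtain ⟨⟨hgt₀, hgt⟩, heqt⟩ := hg t ht
    obtain ⟨hgs, heqs⟩ := hg s hs
    -- `φ s (g t + (s - t)) ≤ φ s (g s) ≤ φ s (g t)`, and `φ s` is strictly antitone
    constructor
    · refine ((hanti s hs).le_iff_ge hgs ⟨hgt₀, hgt.trans hts⟩).1 ?_
      linarith [hmono hts hs.2 (g t) ⟨hgt₀, hgt⟩]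
    · refine ((hanti s hs).le_iff_ge ⟨by linarith, by linarith⟩ hgs).1 ?_
      linarith [hshift hts hs.2 (g t) ⟨hgt₀, hgt⟩]
  refine ⟨g, hg, fun t ht s hs hts => (hcompare ht hs hts).1, fun t ht s hs hts => ?_⟩
  linarith [(hcompare ht hs hts).2]

end LevelSelection

/-- With `f = (· ^ q)` this is `F (t, y, t - y) ^ q`. -/
def transferSum (f : ℝ → ℝ) (a b c t y : ℝ) : ℝ :=
  f (a - t) + f (b + y) + f (c + (t - y))

section TransferSum

variable {f : ℝ → ℝ} {a b c T : ℝ}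

theorem continuousOn_transferSum (hf : StrictConvexOn ℝ (Ioi 0) f) (hb : 0 < b)
    (hba : b + 2 * T ≤ a) (hac : a ≤ c) {t : ℝ} (ht : t ∈ Icc 0 T) :
    ContinuousOn (transferSum f a b c t) (Icc 0 t) := by
  have hfc : ContinuousOn f (Ioi 0) := hf.convexOn.continuousOn isOpen_Ioi
  refine (continuousOn_const.add (hfc.comp (by fun_prop) fun y hy => ?_)).add
    (hfc.comp (by fun_prop) fun y hy => ?_)
  all_goals simp only [mem_Ioi]; linarith [hy.1, hy.2, ht.2]

theorem transferSum_strictAntiOn (hf : StrictConvexOn ℝ (Ioi 0) f) (hb : 0 < b)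
    (hba : b + 2 * T ≤ a) (hac : a ≤ c) {t : ℝ} (ht : t ∈ Icc 0 T) :
    StrictAntiOn (transferSum f a b c t) (Icc 0 t) := by
  obtain ⟨-, htT⟩ := ht
  rintro y₁ ⟨hy₁, -⟩ y₂ ⟨-, hy₂⟩ hlt
  have key := hf.map_sub_map_lt_map_sub_map (x := b + y₁) (x' := b + y₂) (y := c + (t - y₂))
    (y' := c + (t - y₁)) (mem_Ioi.2 (by linarith)) (mem_Ioi.2 (by linarith)) (by linarith)
    (by linarith) (by ring)
  simp only [transferSum]
  linarith

theorem transferSum_le_transferSum (hf : StrictConvexOn ℝ (Ioi 0) f) (hb : 0 < b)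
    (hba : b + 2 * T ≤ a) (hac : a ≤ c) {t s : ℝ} (hts : t ≤ s) (hsT : s ≤ T) {y : ℝ}
    (hy : y ∈ Icc 0 t) : transferSum f a b c t y ≤ transferSum f a b c s y := by
  obtain ⟨hy₀, hyt⟩ := hy
  have key := hf.convexOn.map_sub_map_le_map_sub_map (x := a - s) (x' := a - t)
    (y := c + (t - y)) (y' := c + (s - y)) (mem_Ioi.2 (by linarith)) (mem_Ioi.2 (by linarith))
    (by linarith) (by linarith) (by ring)
  simp only [transferSum]
  linarith

theorem transferSum_shift_le (hf : StrictConvexOn ℝ (Ioi 0) f) (hb : 0 < b)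
    (hba : b + 2 * T ≤ a) {t s : ℝ} (hts : t ≤ s) (hsT : s ≤ T) {y : ℝ}
    (hy : y ∈ Icc 0 t) : transferSum f a b c s (y + (s - t)) ≤ transferSum f a b c t y := by
  obtain ⟨hy₀, hyt⟩ := hy
  have key := hf.convexOn.map_sub_map_le_map_sub_map (x := b + y) (x' := b + (y + (s - t)))
    (y := a - s) (y' := a - t) (mem_Ioi.2 (by linarith)) (mem_Ioi.2 (by linarith))
    (by linarith) (by linarith) (by ring)
  have hc : c + (s - (y + (s - t))) = c + (t - y) := by ring
  simp only [transferSum, hc]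
  linarith

theorem exists_monotoneOn_transferSum_eq (hf : StrictConvexOn ℝ (Ioi 0) f) (hb : 0 < b)
    (hba : b + 2 * T ≤ a) (hac : a ≤ c) :
    ∃ g : ℝ → ℝ, (∀ t ∈ Icc 0 T, g t ∈ Icc 0 t ∧
        transferSum f a b c t (g t) = transferSum f a b c 0 0) ∧
      MonotoneOn g (Icc 0 T) ∧ MonotoneOn (fun t => t - g t) (Icc 0 T) :=
  exists_monotoneOn_level_selection (fun _ ht => continuousOn_transferSum hf hb hba hac ht)
    (fun _ ht => transferSum_strictAntiOn hf hb hba hac ht)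
    (fun _ _ hts hsT _ hy => transferSum_le_transferSum hf hb hba hac hts hsT hy)
    (fun _ _ hts hsT _ hy => transferSum_shift_le hf hb hba hts hsT hy)

end TransferSum

theorem exists_g1_g2_general (d : ℕ) (Δ : ℝ) (hΔ0 : 0 < Δ)
    (hΔ : Δ < 1 / Real.sqrt d) (q : ℝ) (hq : 1 < q)
    (F : ℝ → ℝ → ℝ → ℝ)
    (hF : ∀ x y z : ℝ, F x y z =
      ((1 / Real.sqrt d - x) ^ q + (1 / Real.sqrt d - 2 * Δ / 3 + y) ^ q +
        (1 / Real.sqrt d + 2 * Δ / 3 + z) ^ q) ^ (1 / q)) :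
    ∃ g₁ g₂ : ℝ → ℝ,
      (∀ t ∈ Set.Icc 0 (Δ / 3), g₁ t ∈ Set.Icc 0 (Δ / 3) ∧ g₂ t ∈ Set.Icc 0 (Δ / 3)) ∧
      LipschitzOnWith 1 g₁ (Set.Icc 0 (Δ / 3)) ∧
      LipschitzOnWith 1 g₂ (Set.Icc 0 (Δ / 3)) ∧
      MonotoneOn g₁ (Set.Icc 0 (Δ / 3)) ∧
      MonotoneOn g₂ (Set.Icc 0 (Δ / 3)) ∧
      ∀ t ∈ Set.Icc 0 (Δ / 3), g₁ t + g₂ t = t ∧ F t (g₁ t) (g₂ t) = F 0 0 0 := by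
  set a := 1 / Real.sqrt d
  have hf : StrictConvexOn ℝ (Ioi 0) fun x : ℝ => x ^ q :=
    (strictConvexOn_rpow hq).subset Ioi_subset_Ici_self (convex_Ioi 0)
  obtain ⟨g, hg, hg₁, hg₂⟩ := exists_monotoneOn_transferSum_eq hf
    (a := a) (b := a - 2 * Δ / 3) (c := a + 2 * Δ / 3) (T := Δ / 3)
    (by linarith) (by linarith) (by linarith)
  have hg₂' : MonotoneOn (fun t => t - (t - g t)) (Icc 0 (Δ / 3)) := by simpa using hg₁
  refine ⟨g, fun t => t - g t, fun t ht => ?_, lipschitzOnWith_one_of_monotoneOn_sub hg₁ hg₂,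
    lipschitzOnWith_one_of_monotoneOn_sub hg₂ hg₂', hg₁, hg₂, fun t ht => ⟨by ring, ?_⟩⟩
  · obtain ⟨⟨hg₀, hgt⟩, -⟩ := hg t ht
    exact ⟨⟨hg₀, hgt.trans ht.2⟩, by linarith [ht.2], by linarith [ht.2]⟩
  · have heq := (hg t ht).2
    simp only [transferSum, sub_zero, add_zero] at heq
    rw [hF, hF, heq]
    simp only [sub_zero, add_zero]

/-- For `0 < Δ < 1/√d` and `q ∈ (1, ∞)`, with
`F(x,y,z) = ((1/√d - x)^q + (1/√d - 2Δ/3 + y)^q + (1/√d + 2Δ/3 + z)^q)^{1/q}`,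
there exist `1`-Lipschitz, monotone non-decreasing `g₁, g₂ : [0, Δ/3] → [0, Δ/3]`
such that for all `t ∈ [0, Δ/3]`: `g₁(t) + g₂(t) = t` and
`F(t, g₁(t), g₂(t)) = F(0,0,0)`. -/
theorem exists_g1_g2 (d : ℕ) (hd : 1 ≤ d) (Δ : ℝ) (hΔ0 : 0 < Δ)
    (hΔ : Δ < 1 / Real.sqrt d) (q : ℝ) (hq : 1 < q)
    (F : ℝ → ℝ → ℝ → ℝ)
    (hF : ∀ x y z : ℝ, F x y z =
      ((1 / Real.sqrt d - x) ^ q + (1 / Real.sqrt d - 2 * Δ / 3 + y) ^ q +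
        (1 / Real.sqrt d + 2 * Δ / 3 + z) ^ q) ^ (1 / q)) :
    ∃ g₁ g₂ : ℝ → ℝ,
      (∀ t ∈ Set.Icc 0 (Δ / 3), g₁ t ∈ Set.Icc 0 (Δ / 3) ∧ g₂ t ∈ Set.Icc 0 (Δ / 3)) ∧
      LipschitzOnWith 1 g₁ (Set.Icc 0 (Δ / 3)) ∧
      LipschitzOnWith 1 g₂ (Set.Icc 0 (Δ / 3)) ∧
      MonotoneOn g₁ (Set.Icc 0 (Δ / 3)) ∧
      MonotoneOn g₂ (Set.Icc 0 (Δ / 3)) ∧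
      ∀ t ∈ Set.Icc 0 (Δ / 3), g₁ t + g₂ t = t ∧ F t (g₁ t) (g₂ t) = F 0 0 0 :=
  exists_g1_g2_general d Δ hΔ0 hΔ q hq F hF
end

section
/- Let D_a be the distribution supported uniformly (by arc length) on the union of segments [vᵢ, vᵢ + (aᵢ - λ_a)u) labeled -1 and (vᵢ + (aᵢ + λ_a)u, vᵢ + u] labeled +1, for i = 1,…,d, where vᵢ = R eᵢ, u = (R/√d)Σⱼ eⱼ, λ_a = (r/R)(Σᵢ|1/√d + ā - aᵢ|^q)^{1/q}, and aᵢ > λ_a for all i. Then the linear classifier f_{w^a, 1} with w^a_i = 1/R - d aᵢ/(R√d + dR ā) has robust loss zero at radius r in the ℓ_p norm: every support point of D_a is correctly classified and lies at ℓ_p distance greater than r from the hyperplane ⟨w^a, z⟩ = 1. -/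
open Finset
open scoped ENNReal

/-!
Along the segment through `vᵢ` the score is affine: `⟨w^a, vᵢ + s u⟩ = 1 + c (s - aᵢ)` with
`c = d / (√d + d ā) > 0`, because `⟨w^a, vᵢ + aᵢ u⟩ = 1` and `⟨w^a, u⟩ = c`. So the label is the
sign of `s - aᵢ`. By Hölder, `z ↦ ⟨w^a, z⟩` is `‖w^a‖_q`-Lipschitz for the `ℓ_p` distance, so a
point within distance `r` of the hyperplane `⟨w^a, z⟩ = 1` has score within `r ‖w^a‖_q` of `1`.
Finally `w^a = (c / R) (1/√d + ā - aⱼ)ⱼ`, whence `r ‖w^a‖_q = c λ_a`, while on the support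
`c |s - aᵢ| > c λ_a`.
-/

namespace PiLp

variable {ι : Type*} [Fintype ι]

theorem abs_sum_mul_le_norm_top_mul_norm_one (x : PiLp ∞ fun _ : ι => ℝ)
    (y : PiLp 1 fun _ : ι => ℝ) : |∑ i, x i * y i| ≤ ‖x‖ * ‖y‖ := by
  rw [norm_eq_sum (by simp) y]
  simp only [ENNReal.toReal_one, Real.rpow_one, div_one, Real.norm_eq_abs, mul_sum]
  refine (abs_sum_le_sum_abs _ _).trans (sum_le_sum fun i _ => ?_)
  rw [abs_mul]
  exact mul_le_mul_of_nonneg_right (by simpa using norm_apply_le x i) (abs_nonneg _)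

theorem abs_sum_mul_le_norm_mul_norm {p q : ℝ≥0∞} [hpq : p.HolderConjugate q]
    (x : PiLp p fun _ : ι => ℝ) (y : PiLp q fun _ : ι => ℝ) :
    |∑ i, x i * y i| ≤ ‖x‖ * ‖y‖ := by
  rcases eq_or_ne p ∞ with rfl | hp
  · obtain rfl : q = 1 := (ENNReal.HolderConjugate.eq_top_iff_eq_one ∞ q).mp rfl
    exact abs_sum_mul_le_norm_top_mul_norm_one x y
  rcases eq_or_ne q ∞ with rfl | hq
  · obtain rfl : p = 1 := (ENNReal.HolderConjugate.eq_top_iff_eq_one ∞ p).mp rfl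
    simpa only [mul_comm] using abs_sum_mul_le_norm_top_mul_norm_one y x
  have hpq' := hpq.toReal_of_ne_top hp hq
  rw [norm_eq_sum hpq'.pos x, norm_eq_sum hpq'.symm.pos y]
  refine (abs_sum_le_sum_abs _ _).trans ?_
  simpa [abs_mul] using Real.inner_le_Lp_mul_Lq univ (fun i => |x i|) (fun i => |y i|) hpq'

theorem lipschitzWith_sum_mul {p q : ℝ≥0∞} [Fact (1 ≤ p)] [Fact (1 ≤ q)] [p.HolderConjugate q]
    (w : ι → ℝ) :
    LipschitzWith ‖WithLp.toLp q w‖₊ fun z : PiLp p (fun _ : ι => ℝ) => ∑ i, w i * z i := by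
  refine LipschitzWith.of_dist_le_mul fun x y => ?_
  have hsub : ∑ i, w i * x i - ∑ i, w i * y i = ∑ i, (x - y) i * WithLp.toLp q w i := by
    simp only [← sum_sub_distrib, PiLp.sub_apply]
    exact sum_congr rfl fun i _ => by ring
  rw [Real.dist_eq, dist_eq_norm, coe_nnnorm, hsub, mul_comm]
  exact abs_sum_mul_le_norm_mul_norm _ _

end PiLp

theorem LipschitzWith.abs_sub_le_mul_infDist {X : Type*} [PseudoMetricSpace X] {f : X → ℝ}
    {K : NNReal} (hf : LipschitzWith K f) {b : ℝ} (hb : {z | f z = b}.Nonempty) (x : X) :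
    |f x - b| ≤ K * Metric.infDist x {z | f z = b} := by
  have : Nonempty {z | f z = b} := hb.to_subtype
  rw [Metric.infDist_eq_iInf, Real.mul_iInf_of_nonneg K.coe_nonneg]
  refine le_ciInf fun ⟨z, hz⟩ => ?_
  simpa only [← hz.out, ← Real.dist_eq] using hf.dist_le_mul x z

theorem PiLp.lt_infDist_of_mul_norm_lt {ι : Type*} [Fintype ι] {p q : ℝ≥0∞} [Fact (1 ≤ p)]
    [Fact (1 ≤ q)] [p.HolderConjugate q] {w : ι → ℝ} {b r : ℝ} {x : PiLp p fun _ : ι => ℝ}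
    (hb : {z : PiLp p fun _ : ι => ℝ | ∑ i, w i * z i = b}.Nonempty)
    (h : r * ‖WithLp.toLp q w‖ < |∑ i, w i * x i - b|) :
    r < Metric.infDist x {z : PiLp p fun _ : ι => ℝ | ∑ i, w i * z i = b} := by
  have hdist := (lipschitzWith_sum_mul (q := q) w).abs_sub_le_mul_infDist hb x
  rw [coe_nnnorm] at hdist
  exact lt_of_mul_lt_mul_left (by linarith) (norm_nonneg (WithLp.toLp q w))

namespace Da

variable {d : ℕ} {R abar : ℝ} {a : Fin d → ℝ}

theorem sum_inv_sqrt_add_sub (hd : 0 < d) (habar : abar = 1 / d * ∑ i, a i) :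
    ∑ j, (1 / √d + abar - a j) = √d := by
  have hd' : (0 : ℝ) < d := by exact_mod_cast hd
  simp only [sum_sub_distrib, sum_const, card_univ, Fintype.card_fin, nsmul_eq_mul, habar]
  field_simp
  rw [Real.sq_sqrt hd'.le]
  ring

theorem weight_eq_mul (hd : 0 < d) (hden : √d + d * abar ≠ 0) (hR : R ≠ 0) (j : Fin d) :
    1 / R - d * a j / (R * √d + d * R * abar) =
      d / (√d + d * abar) / R * (1 / √d + abar - a j) := by
  have hd' : (0 : ℝ) < d := by exact_mod_cast hd
  have hsd : √d ≠ 0 := (Real.sqrt_pos.mpr hd').ne'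
  have hden' : R * √d + d * R * abar = R * (√d + d * abar) := by ring
  rw [hden']
  field_simp
  linear_combination Real.mul_self_sqrt hd'.le

theorem sum_mul_vertex_add_smul {v : Fin d → Fin d → ℝ}
    (hv : ∀ i j, v i j = if j = i then R else 0) {u : Fin d → ℝ} (hu : ∀ j, u j = R / √d)
    (w : Fin d → ℝ) (i : Fin d) (s : ℝ) :
    ∑ j, w j * (v i j + s * u j) = R * w i + s * (R / √d) * ∑ j, w j := by
  simp only [hv, hu, mul_add, sum_add_distrib, mul_ite, mul_zero, sum_ite_eq', mem_univ,
    if_true, mul_sum]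
  exact congr_arg₂ _ (mul_comm _ _) (sum_congr rfl fun j _ => by ring)

theorem sum_weight_mul_vertex_add_smul (hd : 0 < d) (hden : √d + d * abar ≠ 0) (hR : R ≠ 0)
    (habar : abar = 1 / d * ∑ i, a i) {v : Fin d → Fin d → ℝ}
    (hv : ∀ i j, v i j = if j = i then R else 0) {u : Fin d → ℝ} (hu : ∀ j, u j = R / √d)
    {w : Fin d → ℝ} (hw : ∀ j, w j = 1 / R - d * a j / (R * √d + d * R * abar)) (i : Fin d)
    (s : ℝ) : ∑ j, w j * (v i j + s * u j) = 1 + d / (√d + d * abar) * (s - a i) := by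
  have hd' : (0 : ℝ) < d := by exact_mod_cast hd
  have hsd : √d ≠ 0 := (Real.sqrt_pos.mpr hd').ne'
  have hw' : ∀ j, w j = d / (√d + d * abar) / R * (1 / √d + abar - a j) := fun j =>
    (hw j).trans (weight_eq_mul hd hden hR j)
  rw [sum_mul_vertex_add_smul hv hu, sum_congr rfl fun j _ => hw' j, ← mul_sum,
    sum_inv_sqrt_add_sub hd habar, hw' i]
  field_simp
  linear_combination -Real.mul_self_sqrt hd'.le

theorem norm_toLp_weight (hd : 0 < d) (hden : 0 < √d + d * abar) (hR : 0 < R) {q : ℝ}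
    (hq : 1 ≤ q) {w : Fin d → ℝ} (hw : ∀ j, w j = 1 / R - d * a j / (R * √d + d * R * abar)) :
    ‖WithLp.toLp (ENNReal.ofReal q) w‖ =
      d / (√d + d * abar) / R * (∑ j, |1 / √d + abar - a j| ^ q) ^ (1 / q) := by
  have : Fact (1 ≤ ENNReal.ofReal q) := ⟨ENNReal.one_le_ofReal.mpr hq⟩
  have hq' : (ENNReal.ofReal q).toReal = q := ENNReal.toReal_ofReal (by linarith)
  have hw' : w = (d / (√d + d * abar) / R) • fun j => 1 / √d + abar - a j :=
    funext fun j => (hw j).trans (weight_eq_mul hd hden.ne' hR.ne' j)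
  rw [hw', WithLp.toLp_smul, norm_smul, Real.norm_of_nonneg (by positivity),
    PiLp.norm_eq_sum (by linarith)]
  simp [hq', Real.norm_eq_abs]

end Da

theorem Da_linearly_r_separated_general (d : ℕ)
    (p : ℝ≥0∞) [Fact (1 ≤ p)]
    (q : ℝ) (hq : 1 ≤ q) (hpq : 1 / p + 1 / ENNReal.ofReal q = 1)
    (R r : ℝ) (hR : 0 < R) (hr : 0 < r)
    (a : Fin d → ℝ) (ha : ∀ i, a i ∈ Set.Icc (0 : ℝ) 1)
    (abar : ℝ) (habar : abar = (1 / (d : ℝ)) * ∑ i, a i)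
    (lam : ℝ)
    (hlam : lam = (r / R) * (∑ i, |1 / Real.sqrt d + abar - a i| ^ q) ^ (1 / q))
    (v : Fin d → Fin d → ℝ) (hv : ∀ i j, v i j = if j = i then R else 0)
    (u : Fin d → ℝ) (hu : ∀ j, u j = R / Real.sqrt d)
    (w : Fin d → ℝ)
    (hw : ∀ i, w i = 1 / R - (d : ℝ) * a i / (R * Real.sqrt d + (d : ℝ) * R * abar)) :
    ∀ i : Fin d, ∀ s : ℝ,
      ((s ∈ Set.Ico (0 : ℝ) (a i - lam) →
        (∑ j, w j * (v i j + s * u j)) < 1 ∧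
        r < Metric.infDist
          ((WithLp.equiv p (Fin d → ℝ)).symm (fun j => v i j + s * u j))
          {z : PiLp p (fun _ : Fin d => ℝ) |
            ∑ j, w j * (WithLp.equiv p (Fin d → ℝ)) z j = 1}) ∧
      (s ∈ Set.Ioc (a i + lam) 1 →
        1 ≤ (∑ j, w j * (v i j + s * u j)) ∧
        r < Metric.infDist
          ((WithLp.equiv p (Fin d → ℝ)).symm (fun j => v i j + s * u j))
          {z : PiLp p (fun _ : Fin d => ℝ) |
            ∑ j, w j * (WithLp.equiv p (Fin d → ℝ)) z j = 1})) := by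
  intro i s
  have : p.HolderConjugate (ENNReal.ofReal q) :=
    ENNReal.holderConjugate_iff.mpr (by simpa using hpq)
  have : Fact (1 ≤ ENNReal.ofReal q) := ⟨ENNReal.one_le_ofReal.mpr hq⟩
  have hd : 0 < d := i.pos
  have hden : 0 < √d + d * abar := by
    have : 0 ≤ ∑ j, a j := sum_nonneg fun j _ => (ha j).1
    have : 0 ≤ abar := habar ▸ by positivity
    positivity
  have hinner := Da.sum_weight_mul_vertex_add_smul hd hden.ne' hR.ne' habar hv hu hw i
  set c := d / (√d + d * abar)
  have hc : 0 < c := by positivity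
  have hnorm : r * ‖WithLp.toLp (ENNReal.ofReal q) w‖ = c * lam := by
    rw [Da.norm_toLp_weight hd hden hR hq hw, hlam]; ring
  have hlam0 : 0 ≤ lam := hlam ▸ by positivity
  have hsep : ∀ t, lam < |t - a i| → r < Metric.infDist
      ((WithLp.equiv p (Fin d → ℝ)).symm (fun j => v i j + t * u j))
      {z : PiLp p (fun _ : Fin d => ℝ) | ∑ j, w j * (WithLp.equiv p (Fin d → ℝ)) z j = 1} := by
    intro t ht
    refine PiLp.lt_infDist_of_mul_norm_lt (q := ENNReal.ofReal q)
      ⟨WithLp.toLp p fun j => v i j + a i * u j, by simpa using hinner (a i)⟩ ?_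
    rw [hnorm]
    simpa [hinner, abs_mul, abs_of_pos hc] using mul_lt_mul_of_pos_left ht hc
  refine ⟨fun ⟨_, hs⟩ => ⟨?_, hsep s ?_⟩, fun ⟨hs, _⟩ => ⟨?_, hsep s ?_⟩⟩
  · rw [hinner]; nlinarith
  · rw [abs_of_neg (by linarith)]; linarith
  · rw [hinner]; nlinarith
  · rw [abs_of_pos (by linarith)]; linarith

/-- For the distribution `D_a` supported on the segments
`[vᵢ, vᵢ + (aᵢ - λ_a)u)` (labeled `-1`) and `(vᵢ + (aᵢ + λ_a)u, vᵢ + u]` (labeled `+1`),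
the linear classifier `f_{w^a, 1}` has robust loss zero at radius `r` in the ℓ_p norm:
every support point is correctly classified (negative points satisfy `⟨w^a, x⟩ < 1`,
positive points `⟨w^a, x⟩ ≥ 1`) and lies at ℓ_p distance greater than `r` from the
hyperplane `⟨w^a, z⟩ = 1`. -/
theorem Da_linearly_r_separated (d : ℕ) (hd : 1 ≤ d)
    (p : ℝ≥0∞) [Fact (1 ≤ p)] (hp : 1 < p)
    (q : ℝ) (hq : 1 ≤ q) (hpq : 1 / p + 1 / ENNReal.ofReal q = 1)
    (R r : ℝ) (hR : 0 < R) (hr : 0 < r)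
    (a : Fin d → ℝ) (ha : ∀ i, a i ∈ Set.Icc (0 : ℝ) 1)
    (abar : ℝ) (habar : abar = (1 / (d : ℝ)) * ∑ i, a i)
    (lam : ℝ)
    (hlam : lam = (r / R) * (∑ i, |1 / Real.sqrt d + abar - a i| ^ q) ^ (1 / q))
    (halam : ∀ i, lam < a i)
    (v : Fin d → Fin d → ℝ) (hv : ∀ i j, v i j = if j = i then R else 0)
    (u : Fin d → ℝ) (hu : ∀ j, u j = R / Real.sqrt d)
    (w : Fin d → ℝ)
    (hw : ∀ i, w i = 1 / R - (d : ℝ) * a i / (R * Real.sqrt d + (d : ℝ) * R * abar)) :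
    ∀ i : Fin d, ∀ s : ℝ,
      ((s ∈ Set.Ico (0 : ℝ) (a i - lam) →
        (∑ j, w j * (v i j + s * u j)) < 1 ∧
        r < Metric.infDist
          ((WithLp.equiv p (Fin d → ℝ)).symm (fun j => v i j + s * u j))
          {z : PiLp p (fun _ : Fin d => ℝ) |
            ∑ j, w j * (WithLp.equiv p (Fin d → ℝ)) z j = 1}) ∧
      (s ∈ Set.Ioc (a i + lam) 1 →
        1 ≤ (∑ j, w j * (v i j + s * u j)) ∧
        r < Metric.infDist
          ((WithLp.equiv p (Fin d → ℝ)).symm (fun j => v i j + s * u j))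
          {z : PiLp p (fun _ : Fin d => ℝ) |
            ∑ j, w j * (WithLp.equiv p (Fin d → ℝ)) z j = 1})) :=
  Da_linearly_r_separated_general d p q hq hpq R r hR hr a ha abar habar lam hlam v hv u hu w hw
end
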